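/- arXiv:2301.00806 — 3 statements merged into one kernel-verified Lean document; each statement's English description precedes it below -/
import Mathlib

section
/- Let K be a PL sphere (or more generally a weak pseudo-manifold) of dimension n-1 whose vertex set is V, and suppose there exist distinct vertices v₁, v₂ such that every facet of K contains v₁ or v₂. Then for every facet of the form {v₁} ∪ σ with v₂ ∉ σ, the set {v₂} ∪ σ is also a facet; consequently every vertex of K other than v₁, v₂ forms an edge with both v₁ and v₂. -/
/-- An abstract simplicial complex on vertices in `ℕ`. -/
def IsComplex (K : Set (Finset ℕ)) : Prop :=
  ∀ σ ∈ K, ∀ τ : Finset ℕ, τ ⊆ σ → τ ∈ K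

/-- The link of a face `σ` of `K`: `Lk_K(σ) = {τ∖σ : σ ⊆ τ ∈ K}`. -/
def linkF (K : Set (Finset ℕ)) (σ : Finset ℕ) : Set (Finset ℕ) :=
  {τ | Disjoint τ σ ∧ τ ∪ σ ∈ K}

/-- `K` is pure of dimension `n - 1`: every face is contained in a face of size `n`. -/
def IsPure (n : ℕ) (K : Set (Finset ℕ)) : Prop :=
  ∀ σ ∈ K, ∃ f ∈ K, f.card = n ∧ σ ⊆ f

/-- `K` is a weak pseudo-manifold of dimension `n - 1`: a pure simplicial complex in which
every ridge (face of size `n - 1`) is contained in exactly two facets (faces of size `n`). -/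
def IsWPM (n : ℕ) (K : Set (Finset ℕ)) : Prop :=
  IsComplex K ∧ IsPure n K ∧
    ∀ r ∈ K, r.card = n - 1 →
      ∃ f g : Finset ℕ, f ∈ K ∧ g ∈ K ∧ f.card = n ∧ g.card = n ∧ f ≠ g ∧
        r ⊆ f ∧ r ⊆ g ∧ ∀ h ∈ K, h.card = n → r ⊆ h → h = f ∨ h = g

/-- Let `K` be a weak pseudo-manifold of dimension `n-1` having two distinct
vertices `v₁, v₂` such that every facet of `K` contains `v₁` or `v₂`.  Then for every facet of
the form `{v₁} ∪ σ` with `v₂ ∉ σ`, the set `{v₂} ∪ σ` is also a facet; consequently every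
vertex of `K` other than `v₁, v₂` forms an edge with both `v₁` and `v₂`. -/
theorem stmt11 (n : ℕ) (K : Set (Finset ℕ)) (hwpm : IsWPM n K)
    (v₁ v₂ : ℕ) (h12 : v₁ ≠ v₂)
    (hcover : ∀ f ∈ K, f.card = n → v₁ ∈ f ∨ v₂ ∈ f) :
    (∀ σ : Finset ℕ, v₁ ∉ σ → v₂ ∉ σ → insert v₁ σ ∈ K → (insert v₁ σ).card = n →
        insert v₂ σ ∈ K ∧ (insert v₂ σ).card = n) ∧
    (∀ u : ℕ, ({u} : Finset ℕ) ∈ K → u ≠ v₁ → u ≠ v₂ →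
        ({u, v₁} : Finset ℕ) ∈ K ∧ ({u, v₂} : Finset ℕ) ∈ K) := by

  obtain ⟨hcx, hpure, hridge⟩ := hwpm
  have part1 : ∀ σ : Finset ℕ, v₁ ∉ σ → v₂ ∉ σ → insert v₁ σ ∈ K → (insert v₁ σ).card = n →
      insert v₂ σ ∈ K ∧ (insert v₂ σ).card = n := by
    intro σ h1 h2 hK hcard
    have hσK : σ ∈ K := hcx _ hK σ (Finset.subset_insert _ _)
    have hcard1 : (insert v₁ σ).card = σ.card + 1 := Finset.card_insert_of_notMem h1
    have hσcard : σ.card = n - 1 := by omega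
    have hn1 : 0 < n := by omega
    obtain ⟨f, g, hf, hg, hfc, hgc, hfg, hrf, hrg, huniq⟩ := hridge σ hσK hσcard
    have key : ∀ h ∈ K, h.card = n → σ ⊆ h → h ≠ insert v₁ σ → h = insert v₂ σ := by
      intro h hh hhc hsub hne
      rcases hcover h hh hhc with hv | hv
      · exfalso; apply hne
        refine (Finset.eq_of_subset_of_card_le (Finset.insert_subset hv hsub) ?_).symm
        rw [hhc, Finset.card_insert_of_notMem h1]; omega
      · refine (Finset.eq_of_subset_of_card_le (Finset.insert_subset hv hsub) ?_).symm
        rw [hhc, Finset.card_insert_of_notMem h2]; omega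
    have hcard2 : (insert v₂ σ).card = n := by
      rw [Finset.card_insert_of_notMem h2]; omega
    rcases huniq (insert v₁ σ) hK hcard (Finset.subset_insert _ _) with h | h
    · have hgne : g ≠ insert v₁ σ := by rw [h]; exact Ne.symm hfg
      have := key g hg hgc hrg hgne
      exact ⟨this ▸ hg, hcard2⟩
    · have hfne : f ≠ insert v₁ σ := by rw [h]; exact hfg
      have := key f hf hfc hrf hfne
      exact ⟨this ▸ hf, hcard2⟩
  refine ⟨part1, ?_⟩
  intro u huK hu1 hu2
  obtain ⟨f, hf, hfc, hsub⟩ := hpure {u} huK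
  have hu : u ∈ f := hsub (Finset.mem_singleton_self u)
  have edge : ∀ w ∈ f, ({u, w} : Finset ℕ) ∈ K := by
    intro w hw
    exact hcx f hf _ (Finset.insert_subset hu (Finset.singleton_subset_iff.2 hw))
  have main : ∀ a b : ℕ, a ≠ b → a ∈ f → u ≠ a → u ≠ b →
      (∀ σ : Finset ℕ, a ∉ σ → b ∉ σ → insert a σ ∈ K → (insert a σ).card = n →
        insert b σ ∈ K ∧ (insert b σ).card = n) →
      ({u, b} : Finset ℕ) ∈ K := by
    intro a b hab ha hua hub hp
    by_cases hbf : b ∈ f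
    · exact edge b hbf
    · set σ := f.erase a with hσ
      have h1 : a ∉ σ := Finset.notMem_erase _ _
      have h2 : b ∉ σ := fun h => hbf (Finset.mem_of_mem_erase h)
      have hfeq : insert a σ = f := Finset.insert_erase ha
      obtain ⟨hK2, hc2⟩ := hp σ h1 h2 (hfeq ▸ hf) (hfeq ▸ hfc)
      have huσ : u ∈ σ := Finset.mem_erase.2 ⟨hua, hu⟩
      exact hcx _ hK2 _ (Finset.insert_subset (Finset.mem_insert_of_mem huσ)
        (Finset.singleton_subset_iff.2 (Finset.mem_insert_self _ _)))
  have part1' : ∀ σ : Finset ℕ, v₂ ∉ σ → v₁ ∉ σ → insert v₂ σ ∈ K → (insert v₂ σ).card = n →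
      insert v₁ σ ∈ K ∧ (insert v₁ σ).card = n := by
    intro σ h2 h1 hK hcard
    have hσK : σ ∈ K := hcx _ hK σ (Finset.subset_insert _ _)
    have hcard2 : (insert v₂ σ).card = σ.card + 1 := Finset.card_insert_of_notMem h2
    have hσcard : σ.card = n - 1 := by omega
    obtain ⟨f', g', hf', hg', hfc', hgc', hfg', hrf', hrg', huniq'⟩ := hridge σ hσK hσcard
    have key : ∀ h ∈ K, h.card = n → σ ⊆ h → h ≠ insert v₂ σ → h = insert v₁ σ := by
      intro h hh hhc hsub hne
      rcases hcover h hh hhc with hv | hv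
      · refine (Finset.eq_of_subset_of_card_le (Finset.insert_subset hv hsub) ?_).symm
        rw [hhc, Finset.card_insert_of_notMem h1]; omega
      · exfalso; apply hne
        refine (Finset.eq_of_subset_of_card_le (Finset.insert_subset hv hsub) ?_).symm
        rw [hhc, Finset.card_insert_of_notMem h2]; omega
    have hc1 : (insert v₁ σ).card = n := by
      rw [Finset.card_insert_of_notMem h1]; omega
    rcases huniq' (insert v₂ σ) hK hcard (Finset.subset_insert _ _) with h | h
    · have hgne : g' ≠ insert v₂ σ := by rw [h]; exact Ne.symm hfg'
      have := key g' hg' hgc' hrg' hgne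
      exact ⟨this ▸ hg', hc1⟩
    · have hfne : f' ≠ insert v₂ σ := by rw [h]; exact hfg'
      have := key f' hf' hfc' hrf' hfne
      exact ⟨this ▸ hf', hc1⟩
  rcases hcover f hf hfc with hv | hv
  · exact ⟨edge v₁ hv, main v₁ v₂ h12 hv hu1 hu2 part1⟩
  · exact ⟨main v₂ v₁ (Ne.symm h12) hv hu2 hu1 part1', edge v₂ hv⟩
end

section
/- Let K be the boundary of the hexagon with facets {1,2},{2,3},{3,4},{4,5},{5,6},{6,1}, and let P = {{1,4},{2,5},{3,6}}. A fan-giving characteristic map λ : [6] → Z² with λ(1) = (1,0), λ(2) = (0,1) has P as an optimal partition if and only if λ(3) = (-1,1), λ(4) = (-1,0), λ(5) = (0,-1), λ(6) = (1,-1). -/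
/-- `σ` is a minimal non-face of `K`. -/
def IsMNF (K : Set (Finset ℕ)) (σ : Finset ℕ) : Prop :=
  σ ∉ K ∧ ∀ τ : Finset ℕ, τ ⊂ σ → τ ∈ K

/-- The boundary of the hexagon with facets `{1,2},{2,3},{3,4},{4,5},{5,6},{6,1}`. -/
def hexK : Set (Finset ℕ) :=
  {σ | σ ⊆ {1, 2} ∨ σ ⊆ {2, 3} ∨ σ ⊆ {3, 4} ∨ σ ⊆ {4, 5} ∨ σ ⊆ {5, 6} ∨ σ ⊆ {6, 1}}

/-- `{a, b}` is a `ℤ`-basis of `ℤ²` (unimodular pair): determinant `±1`. -/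
def UPair (a b : ℤ × ℤ) : Prop :=
  a.1 * b.2 - a.2 * b.1 = 1 ∨ a.1 * b.2 - a.2 * b.1 = -1

/-- The real cone spanned by the vectors `λ(i)`, `i ∈ s`. -/
def coneOf (lam : ℕ → ℤ × ℤ) (s : Finset ℕ) : Set (ℝ × ℝ) :=
  {x | ∃ c : ℕ → ℝ, (∀ i, 0 ≤ c i) ∧
    x = ∑ i ∈ s, c i • ((((lam i).1 : ℝ), ((lam i).2 : ℝ)) : ℝ × ℝ)}

/-- `λ` is fan-giving for `K`: the cones on the faces of `K` form a complete fan in `ℝ²`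
whose underlying simplicial complex is `K` (the cones cover `ℝ²` and any two of them meet
along the cone of the common face). -/
def FanGiving (lam : ℕ → ℤ × ℤ) (K : Set (Finset ℕ)) : Prop :=
  (⋃ σ ∈ K, coneOf lam σ) = Set.univ ∧
    ∀ σ ∈ K, ∀ τ ∈ K, coneOf lam σ ∩ coneOf lam τ = coneOf lam (σ ∩ τ)

lemma mem_coneOf_pair {lam : ℕ → ℤ × ℤ} {i j : ℕ} (hij : i ≠ j) (a b : ℝ)
    (ha : 0 ≤ a) (hb : 0 ≤ b) :
    a • ((((lam i).1 : ℝ), ((lam i).2 : ℝ)) : ℝ × ℝ) +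
      b • ((((lam j).1 : ℝ), ((lam j).2 : ℝ)) : ℝ × ℝ) ∈ coneOf lam {i, j} := by
  refine ⟨fun k => if k = i then a else if k = j then b else 0, ?_, ?_⟩
  · intro k
    dsimp only
    split
    · exact ha
    · split
      · exact hb
      · exact le_rfl
  · rw [Finset.sum_pair hij]
    simp [hij, Ne.symm hij]

lemma coneOf_single {lam : ℕ → ℤ × ℤ} {k : ℕ} {x : ℝ × ℝ} (hx : x ∈ coneOf lam {k}) :
    ∃ c : ℝ, 0 ≤ c ∧ x = c • ((((lam k).1 : ℝ), ((lam k).2 : ℝ)) : ℝ × ℝ) := by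
  obtain ⟨c, hc, hx⟩ := hx
  exact ⟨c k, hc k, by simpa using hx⟩

lemma mem_hexK_pair12 : ({1, 2} : Finset ℕ) ∈ hexK := by
  simp only [hexK, Set.mem_setOf_eq]; decide

lemma mem_hexK_pair23 : ({2, 3} : Finset ℕ) ∈ hexK := by
  simp only [hexK, Set.mem_setOf_eq]; decide

lemma mem_hexK_pair34 : ({3, 4} : Finset ℕ) ∈ hexK := by
  simp only [hexK, Set.mem_setOf_eq]; decide

/-- A fan-giving characteristic map `λ` over the hexagon boundary with
`λ(1) = (1,0)`, `λ(2) = (0,1)` has `P = {{1,4},{2,5},{3,6}}` as an optimal partition (each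
block a minimal non-face with zero `λ`-sum) iff `λ(3) = (-1,1)`, `λ(4) = (-1,0)`,
`λ(5) = (0,-1)`, `λ(6) = (1,-1)`. -/
theorem stmt15 (lam : ℕ → ℤ × ℤ)
    (hchar : ∀ i j : ℕ, i ≠ j → ({i, j} : Finset ℕ) ∈ hexK → UPair (lam i) (lam j))
    (hfan : FanGiving lam hexK)
    (h1 : lam 1 = (1, 0)) (h2 : lam 2 = (0, 1)) :
    (∀ b ∈ ({{1, 4}, {2, 5}, {3, 6}} : Finset (Finset ℕ)),
        IsMNF hexK b ∧ ∑ i ∈ b, lam i = 0) ↔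
      (lam 3 = (-1, 1) ∧ lam 4 = (-1, 0) ∧ lam 5 = (0, -1) ∧ lam 6 = (1, -1)) := by
  constructor
  · intro h
    have hs14 : lam 1 + lam 4 = 0 := by
      have := (h {1, 4} (by decide)).2
      rwa [Finset.sum_pair (by norm_num)] at this
    have hs25 : lam 2 + lam 5 = 0 := by
      have := (h {2, 5} (by decide)).2
      rwa [Finset.sum_pair (by norm_num)] at this
    have hs36 : lam 3 + lam 6 = 0 := by
      have := (h {3, 6} (by decide)).2
      rwa [Finset.sum_pair (by norm_num)] at this
    have h4 : lam 4 = (-1, 0) := by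
      have := eq_neg_of_add_eq_zero_right hs14
      rw [h1] at this; rw [this]; rfl
    have h5 : lam 5 = (0, -1) := by
      have := eq_neg_of_add_eq_zero_right hs25
      rw [h2] at this; rw [this]; rfl
    have h6 : lam 6 = -lam 3 := eq_neg_of_add_eq_zero_right hs36
    -- determinant constraints pin λ3 to (±1, ±1)
    have u23 := hchar 2 3 (by norm_num) mem_hexK_pair23
    have u34 := hchar 3 4 (by norm_num) mem_hexK_pair34
    rw [h2] at u23
    rw [h4] at u34
    unfold UPair at u23 u34
    simp only at u23 u34
    have hx : (lam 3).1 = 1 ∨ (lam 3).1 = -1 := by rcases u23 with h | h <;> omega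
    have hy : (lam 3).2 = 1 ∨ (lam 3).2 = -1 := by rcases u34 with h | h <;> omega
    -- rule out the three bad possibilities using the fan condition
    have heq12 := hfan.2 {1, 2} mem_hexK_pair12 {2, 3} mem_hexK_pair23
    have hi12 : ({1, 2} : Finset ℕ) ∩ {2, 3} = {2} := by decide
    rw [hi12] at heq12
    have heq23 := hfan.2 {2, 3} mem_hexK_pair23 {3, 4} mem_hexK_pair34
    have hi23 : ({2, 3} : Finset ℕ) ∩ {3, 4} = {3} := by decide
    rw [hi23] at heq23
    rcases hx with hx | hx
    · exfalso
      rcases hy with hy | hy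
      · -- λ3 = (1,1): the point (1,1) lies in cone{1,2} ∩ cone{2,3} but not in cone{2}
        have h3 : lam 3 = (1, 1) := Prod.ext hx hy
        have m1 : ((1, 1) : ℝ × ℝ) ∈ coneOf lam {1, 2} := by
          have := mem_coneOf_pair (lam := lam) (i := 1) (j := 2) (by norm_num) 1 1
            zero_le_one zero_le_one
          rw [h1, h2] at this
          norm_num at this
          convert this using 2 <;> norm_num
        have m2 : ((1, 1) : ℝ × ℝ) ∈ coneOf lam {2, 3} := by
          have := mem_coneOf_pair (lam := lam) (i := 2) (j := 3) (by norm_num) 0 1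
            le_rfl zero_le_one
          rw [h2, h3] at this
          norm_num at this
          convert this using 2 <;> norm_num
        have : ((1, 1) : ℝ × ℝ) ∈ coneOf lam {2} := heq12 ▸ ⟨m1, m2⟩
        obtain ⟨c, hc, hcx⟩ := coneOf_single this
        rw [h2] at hcx
        have := congrArg Prod.fst hcx
        simp at this
      · -- λ3 = (1,-1): the point (1,0) lies in cone{1,2} ∩ cone{2,3} but not in cone{2}
        have h3 : lam 3 = (1, -1) := Prod.ext hx hy
        have m1 : ((1, 0) : ℝ × ℝ) ∈ coneOf lam {1, 2} := by
          have := mem_coneOf_pair (lam := lam) (i := 1) (j := 2) (by norm_num) 1 0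
            zero_le_one le_rfl
          rw [h1, h2] at this
          norm_num at this
          convert this using 2 <;> norm_num
        have m2 : ((1, 0) : ℝ × ℝ) ∈ coneOf lam {2, 3} := by
          have := mem_coneOf_pair (lam := lam) (i := 2) (j := 3) (by norm_num) 1 1
            zero_le_one zero_le_one
          rw [h2, h3] at this
          norm_num at this
          convert this using 2 <;> norm_num
        have : ((1, 0) : ℝ × ℝ) ∈ coneOf lam {2} := heq12 ▸ ⟨m1, m2⟩
        obtain ⟨c, hc, hcx⟩ := coneOf_single this
        rw [h2] at hcx
        have := congrArg Prod.fst hcx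
        simp at this
    · rcases hy with hy | hy
      · -- the good case
        have h3 : lam 3 = (-1, 1) := Prod.ext hx hy
        refine ⟨h3, h4, h5, ?_⟩
        rw [h6, h3]; rfl
      · -- λ3 = (-1,-1): the point (-1,0) lies in cone{2,3} ∩ cone{3,4} but not in cone{3}
        exfalso
        have h3 : lam 3 = (-1, -1) := Prod.ext hx hy
        have m1 : ((-1, 0) : ℝ × ℝ) ∈ coneOf lam {2, 3} := by
          have := mem_coneOf_pair (lam := lam) (i := 2) (j := 3) (by norm_num) 1 1
            zero_le_one zero_le_one
          rw [h2, h3] at this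
          norm_num at this
          convert this using 2 <;> norm_num
        have m2 : ((-1, 0) : ℝ × ℝ) ∈ coneOf lam {3, 4} := by
          have := mem_coneOf_pair (lam := lam) (i := 3) (j := 4) (by norm_num) 0 1
            le_rfl zero_le_one
          rw [h3, h4] at this
          norm_num at this
          convert this using 2 <;> norm_num
        have : ((-1, 0) : ℝ × ℝ) ∈ coneOf lam {3} := heq23 ▸ ⟨m1, m2⟩
        obtain ⟨c, hc, hcx⟩ := coneOf_single this
        rw [h3] at hcx
        have hfst := congrArg Prod.fst hcx
        have hsnd := congrArg Prod.snd hcx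
        simp at hfst hsnd
        rw [hsnd] at hfst
        norm_num at hfst
  · rintro ⟨h3, h4, h5, h6⟩ b hb
    have hmnf : ∀ σ : Finset ℕ, σ ∈ ({{1, 4}, {2, 5}, {3, 6}} : Finset (Finset ℕ)) →
        IsMNF hexK σ := by
      intro σ hσ
      fin_cases hσ <;>
      · constructor
        · simp only [hexK, Set.mem_setOf_eq]; decide
        · intro τ hτ
          have hp : τ ∈ Finset.powerset _ := Finset.mem_powerset.2 hτ.1
          fin_cases hp <;> simp only [hexK, Set.mem_setOf_eq] <;> revert hτ <;> decide
    refine ⟨hmnf b hb, ?_⟩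
    fin_cases hb
    · rw [Finset.sum_pair (by norm_num), h1, h4]; rfl
    · rw [Finset.sum_pair (by norm_num), h2, h5]; rfl
    · rw [Finset.sum_pair (by norm_num), h3, h6]; rfl
end

section
/- Let K be the boundary of the hexagon with facets {1,2},{2,3},{3,4},{4,5},{5,6},{6,1}. There is no fan-giving characteristic map λ : [6] → Z² for which the partition P₁ = {{1,3},{2,5},{4,6}} is an optimal partition. -/
lemma pair_mem_cone (lam : ℕ → ℤ × ℤ) {i j : ℕ} (hij : i ≠ j) {a b : ℝ}
    (ha : 0 ≤ a) (hb : 0 ≤ b) :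
    a • ((((lam i).1 : ℝ), ((lam i).2 : ℝ)) : ℝ × ℝ)
      + b • ((((lam j).1 : ℝ), ((lam j).2 : ℝ)) : ℝ × ℝ) ∈ coneOf lam {i, j} := by
  refine ⟨fun k => if k = i then a else if k = j then b else 0, fun k => ?_, ?_⟩
  · dsimp only
    split_ifs <;> first | exact ha | exact hb | exact le_refl 0
  · rw [Finset.sum_pair hij]
    simp [Ne.symm hij]

lemma cone_single_elim (lam : ℕ → ℤ × ℤ) (i : ℕ) {x : ℝ × ℝ}
    (h : x ∈ coneOf lam {i}) :
    ∃ c : ℝ, 0 ≤ c ∧ x = c • ((((lam i).1 : ℝ), ((lam i).2 : ℝ)) : ℝ × ℝ) := by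
  obtain ⟨c, hc, hx⟩ := h
  exact ⟨c i, hc i, by rwa [Finset.sum_singleton] at hx⟩

lemma cone_empty_elim (lam : ℕ → ℤ × ℤ) {x : ℝ × ℝ}
    (h : x ∈ coneOf lam (∅ : Finset ℕ)) : x = 0 := by
  obtain ⟨c, -, hx⟩ := h
  simpa using hx

/-- There is no fan-giving characteristic map `λ` over the hexagon boundary
for which the partition `P₁ = {{1,3},{2,5},{4,6}}` is an optimal partition (each block a
minimal non-face with zero `λ`-sum). -/
theorem stmt16 :
    ¬ ∃ lam : ℕ → ℤ × ℤ,
        (∀ i j : ℕ, i ≠ j → ({i, j} : Finset ℕ) ∈ hexK → UPair (lam i) (lam j)) ∧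
        FanGiving lam hexK ∧
        (∀ b ∈ ({{1, 3}, {2, 5}, {4, 6}} : Finset (Finset ℕ)),
          IsMNF hexK b ∧ ∑ i ∈ b, lam i = 0) := by
  rintro ⟨lam, hU, ⟨-, hint⟩, hopt⟩
  obtain ⟨⟨A, B⟩, h1⟩ : ∃ v : ℤ × ℤ, lam 1 = v := ⟨_, rfl⟩
  obtain ⟨⟨C, D⟩, h2⟩ : ∃ v : ℤ × ℤ, lam 2 = v := ⟨_, rfl⟩
  obtain ⟨⟨E, F⟩, h4⟩ : ∃ v : ℤ × ℤ, lam 4 = v := ⟨_, rfl⟩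
  -- zero-sum conditions
  have h13 : lam 1 + lam 3 = 0 := by
    have h := (hopt {1, 3} (by decide)).2
    rwa [Finset.sum_pair (by norm_num : (1 : ℕ) ≠ 3)] at h
  have h25 : lam 2 + lam 5 = 0 := by
    have h := (hopt {2, 5} (by decide)).2
    rwa [Finset.sum_pair (by norm_num : (2 : ℕ) ≠ 5)] at h
  have h46 : lam 4 + lam 6 = 0 := by
    have h := (hopt {4, 6} (by decide)).2
    rwa [Finset.sum_pair (by norm_num : (4 : ℕ) ≠ 6)] at h
  have h3 : lam 3 = (-A, -B) := by
    have hf := congrArg Prod.fst h13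
    have hs := congrArg Prod.snd h13
    rw [h1] at hf hs
    simp only [Prod.fst_add, Prod.snd_add, Prod.fst_zero, Prod.snd_zero] at hf hs
    rw [Prod.ext_iff]
    constructor <;> simp <;> omega
  have h5 : lam 5 = (-C, -D) := by
    have hf := congrArg Prod.fst h25
    have hs := congrArg Prod.snd h25
    rw [h2] at hf hs
    simp only [Prod.fst_add, Prod.snd_add, Prod.fst_zero, Prod.snd_zero] at hf hs
    rw [Prod.ext_iff]
    constructor <;> simp <;> omega
  have h6 : lam 6 = (-E, -F) := by
    have hf := congrArg Prod.fst h46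
    have hs := congrArg Prod.snd h46
    rw [h4] at hf hs
    simp only [Prod.fst_add, Prod.snd_add, Prod.fst_zero, Prod.snd_zero] at hf hs
    rw [Prod.ext_iff]
    constructor <;> simp <;> omega
  -- hexK memberships
  have hK12 : ({1, 2} : Finset ℕ) ∈ hexK := Or.inl (by decide)
  have hK23 : ({2, 3} : Finset ℕ) ∈ hexK := Or.inr (Or.inl (by decide))
  have hK34 : ({3, 4} : Finset ℕ) ∈ hexK := Or.inr (Or.inr (Or.inl (by decide)))
  have hK45 : ({4, 5} : Finset ℕ) ∈ hexK := Or.inr (Or.inr (Or.inr (Or.inl (by decide))))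
  have hK56 : ({5, 6} : Finset ℕ) ∈ hexK :=
    Or.inr (Or.inr (Or.inr (Or.inr (Or.inl (by decide)))))
  have hK61 : ({6, 1} : Finset ℕ) ∈ hexK :=
    Or.inr (Or.inr (Or.inr (Or.inr (Or.inr (by decide)))))
  -- unimodularity conditions
  have hd : A * D - B * C = 1 ∨ A * D - B * C = -1 := by
    have h := hU 1 2 (by norm_num) hK12
    rw [h1, h2] at h
    simpa [UPair] using h
  have hq' : A * F - B * E = 1 ∨ A * F - B * E = -1 := by
    have h := hU 3 4 (by norm_num) hK34
    rw [h3, h4] at h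
    simp only [UPair] at h
    rcases h with h | h
    · right; linear_combination -h
    · left; linear_combination -h
  have hp' : E * D - F * C = 1 ∨ E * D - F * C = -1 := by
    have h := hU 4 5 (by norm_num) hK45
    rw [h4, h5] at h
    simp only [UPair] at h
    rcases h with h | h
    · right; linear_combination -h
    · left; linear_combination -h
  have hdd : (A * D - B * C) * (A * D - B * C) = 1 := by
    rcases hd with h | h <;> rw [h] <;> norm_num
  have hEF0 : ¬ (E = 0 ∧ F = 0) := by
    rintro ⟨rfl, rfl⟩
    rcases hp' with h | h <;> simp at h
  -- decomposition λ4 = p λ1 + q λ2 with p, q ∈ {±1}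
  obtain ⟨p, q, hp, hq, hE, hF⟩ :
      ∃ p q : ℤ, (p = 1 ∨ p = -1) ∧ (q = 1 ∨ q = -1) ∧
        E = p * A + q * C ∧ F = p * B + q * D := by
    refine ⟨(E * D - F * C) * (A * D - B * C), (A * F - B * E) * (A * D - B * C),
      ?_, ?_, ?_, ?_⟩
    · rcases hp' with h | h <;> rcases hd with h' | h' <;> rw [h, h'] <;> norm_num
    · rcases hq' with h | h <;> rcases hd with h' | h' <;> rw [h, h'] <;> norm_num
    · linear_combination (-E) * hdd
    · linear_combination (-F) * hdd
  have hdR : (A : ℝ) * D - (B : ℝ) * C = 1 ∨ (A : ℝ) * D - (B : ℝ) * C = -1 := by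
    exact_mod_cast hd
  rcases hp with rfl | rfl <;> rcases hq with rfl | rfl
  · -- λ4 = λ1 + λ2 : λ4 ∈ cone{1,2} ∩ cone{3,4} = cone ∅
    have hE' : E = A + C := by omega
    have hF' : F = B + D := by omega
    have m1 : (((E : ℝ), (F : ℝ)) : ℝ × ℝ) ∈ coneOf lam {1, 2} := by
      have hx : (((E : ℝ), (F : ℝ)) : ℝ × ℝ)
          = (1 : ℝ) • ((((lam 1).1 : ℝ), ((lam 1).2 : ℝ)) : ℝ × ℝ)
            + (1 : ℝ) • ((((lam 2).1 : ℝ), ((lam 2).2 : ℝ)) : ℝ × ℝ) := by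
        rw [h1, h2, hE', hF']
        simp only [one_smul, Prod.mk_add_mk, Prod.mk.injEq]
        push_cast
        constructor <;> ring
      rw [hx]
      exact pair_mem_cone lam (by norm_num) zero_le_one zero_le_one
    have m2 : (((E : ℝ), (F : ℝ)) : ℝ × ℝ) ∈ coneOf lam {3, 4} := by
      have hx : (((E : ℝ), (F : ℝ)) : ℝ × ℝ)
          = (0 : ℝ) • ((((lam 3).1 : ℝ), ((lam 3).2 : ℝ)) : ℝ × ℝ)
            + (1 : ℝ) • ((((lam 4).1 : ℝ), ((lam 4).2 : ℝ)) : ℝ × ℝ) := by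
        rw [h4]; simp
      rw [hx]
      exact pair_mem_cone lam (by norm_num) le_rfl zero_le_one
    have hmem : (((E : ℝ), (F : ℝ)) : ℝ × ℝ) ∈ coneOf lam (({1, 2} : Finset ℕ) ∩ {3, 4}) := by
      rw [← hint {1, 2} hK12 {3, 4} hK34]; exact ⟨m1, m2⟩
    rw [show (({1, 2} : Finset ℕ) ∩ {3, 4}) = ∅ by decide] at hmem
    have h0 := cone_empty_elim lam hmem
    rw [Prod.mk_eq_zero] at h0
    exact hEF0 ⟨by exact_mod_cast h0.1, by exact_mod_cast h0.2⟩
  · -- λ4 = λ1 - λ2 : λ6 = λ2 + λ3 ∈ cone{2,3} ∩ cone{5,6} = cone ∅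
    have hE' : E = A - C := by omega
    have hF' : F = B - D := by omega
    have m1 : (((-E : ℤ) : ℝ), ((-F : ℤ) : ℝ)) ∈ coneOf lam {2, 3} := by
      have hx : ((((-E : ℤ) : ℝ), ((-F : ℤ) : ℝ)) : ℝ × ℝ)
          = (1 : ℝ) • ((((lam 2).1 : ℝ), ((lam 2).2 : ℝ)) : ℝ × ℝ)
            + (1 : ℝ) • ((((lam 3).1 : ℝ), ((lam 3).2 : ℝ)) : ℝ × ℝ) := by
        rw [h2, h3, hE', hF']
        simp only [one_smul, Prod.mk_add_mk, Prod.mk.injEq]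
        push_cast
        constructor <;> ring
      rw [hx]
      exact pair_mem_cone lam (by norm_num) zero_le_one zero_le_one
    have m2 : ((((-E : ℤ) : ℝ), ((-F : ℤ) : ℝ)) : ℝ × ℝ) ∈ coneOf lam {5, 6} := by
      have hx : ((((-E : ℤ) : ℝ), ((-F : ℤ) : ℝ)) : ℝ × ℝ)
          = (0 : ℝ) • ((((lam 5).1 : ℝ), ((lam 5).2 : ℝ)) : ℝ × ℝ)
            + (1 : ℝ) • ((((lam 6).1 : ℝ), ((lam 6).2 : ℝ)) : ℝ × ℝ) := by
        rw [h6]; simp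
      rw [hx]
      exact pair_mem_cone lam (by norm_num) le_rfl zero_le_one
    have hmem : ((((-E : ℤ) : ℝ), ((-F : ℤ) : ℝ)) : ℝ × ℝ)
        ∈ coneOf lam (({2, 3} : Finset ℕ) ∩ {5, 6}) := by
      rw [← hint {2, 3} hK23 {5, 6} hK56]; exact ⟨m1, m2⟩
    rw [show (({2, 3} : Finset ℕ) ∩ {5, 6}) = ∅ by decide] at hmem
    have h0 := cone_empty_elim lam hmem
    rw [Prod.mk_eq_zero] at h0
    have e1 : (-E : ℤ) = 0 := by exact_mod_cast h0.1
    have e2 : (-F : ℤ) = 0 := by exact_mod_cast h0.2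
    exact hEF0 ⟨by omega, by omega⟩
  · -- λ4 = λ2 - λ1 = λ2 + λ3 : λ4 ∈ cone{2,3} ∩ cone{3,4} = cone{3}
    have hE' : E = C - A := by omega
    have hF' : F = D - B := by omega
    have m1 : (((E : ℝ), (F : ℝ)) : ℝ × ℝ) ∈ coneOf lam {2, 3} := by
      have hx : (((E : ℝ), (F : ℝ)) : ℝ × ℝ)
          = (1 : ℝ) • ((((lam 2).1 : ℝ), ((lam 2).2 : ℝ)) : ℝ × ℝ)
            + (1 : ℝ) • ((((lam 3).1 : ℝ), ((lam 3).2 : ℝ)) : ℝ × ℝ) := by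
        rw [h2, h3, hE', hF']
        simp only [one_smul, Prod.mk_add_mk, Prod.mk.injEq]
        push_cast
        constructor <;> ring
      rw [hx]
      exact pair_mem_cone lam (by norm_num) zero_le_one zero_le_one
    have m2 : (((E : ℝ), (F : ℝ)) : ℝ × ℝ) ∈ coneOf lam {3, 4} := by
      have hx : (((E : ℝ), (F : ℝ)) : ℝ × ℝ)
          = (0 : ℝ) • ((((lam 3).1 : ℝ), ((lam 3).2 : ℝ)) : ℝ × ℝ)
            + (1 : ℝ) • ((((lam 4).1 : ℝ), ((lam 4).2 : ℝ)) : ℝ × ℝ) := by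
        rw [h4]; simp
      rw [hx]
      exact pair_mem_cone lam (by norm_num) le_rfl zero_le_one
    have hmem : (((E : ℝ), (F : ℝ)) : ℝ × ℝ)
        ∈ coneOf lam (({2, 3} : Finset ℕ) ∩ {3, 4}) := by
      rw [← hint {2, 3} hK23 {3, 4} hK34]; exact ⟨m1, m2⟩
    rw [show (({2, 3} : Finset ℕ) ∩ {3, 4}) = ({3} : Finset ℕ) by decide] at hmem
    obtain ⟨c, -, hc⟩ := cone_single_elim lam 3 hmem
    rw [h3, Prod.ext_iff] at hc
    obtain ⟨e1, e2⟩ := hc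
    simp only [Prod.smul_mk, smul_eq_mul] at e1 e2
    rw [hE'] at e1
    rw [hF'] at e2
    push_cast at e1 e2
    have hz : (A : ℝ) * D - (B : ℝ) * C = 0 := by
      linear_combination (A : ℝ) * e2 - (B : ℝ) * e1
    rcases hdR with h | h <;> linarith
  · -- λ4 = -λ1 - λ2 : λ6 = λ1 + λ2 ∈ cone{1,2} ∩ cone{6,1} = cone{1}
    have hE' : E = -A - C := by omega
    have hF' : F = -B - D := by omega
    have h6' : lam 6 = (A + C, B + D) := by
      rw [h6, hE', hF']; simp [Prod.ext_iff]; constructor <;> ring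
    have m1 : ((((A : ℝ) + C), ((B : ℝ) + D)) : ℝ × ℝ) ∈ coneOf lam {1, 2} := by
      have hx : ((((A : ℝ) + C), ((B : ℝ) + D)) : ℝ × ℝ)
          = (1 : ℝ) • ((((lam 1).1 : ℝ), ((lam 1).2 : ℝ)) : ℝ × ℝ)
            + (1 : ℝ) • ((((lam 2).1 : ℝ), ((lam 2).2 : ℝ)) : ℝ × ℝ) := by
        rw [h1, h2]
        simp [Prod.ext_iff]
      rw [hx]
      exact pair_mem_cone lam (by norm_num) zero_le_one zero_le_one
    have m2 : ((((A : ℝ) + C), ((B : ℝ) + D)) : ℝ × ℝ) ∈ coneOf lam {6, 1} := by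
      have hx : ((((A : ℝ) + C), ((B : ℝ) + D)) : ℝ × ℝ)
          = (1 : ℝ) • ((((lam 6).1 : ℝ), ((lam 6).2 : ℝ)) : ℝ × ℝ)
            + (0 : ℝ) • ((((lam 1).1 : ℝ), ((lam 1).2 : ℝ)) : ℝ × ℝ) := by
        rw [h6']
        simp [Prod.ext_iff]
      rw [hx]
      exact pair_mem_cone lam (by norm_num) zero_le_one le_rfl
    have hmem : ((((A : ℝ) + C), ((B : ℝ) + D)) : ℝ × ℝ)
        ∈ coneOf lam (({1, 2} : Finset ℕ) ∩ {6, 1}) := by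
      rw [← hint {1, 2} hK12 {6, 1} hK61]; exact ⟨m1, m2⟩
    rw [show (({1, 2} : Finset ℕ) ∩ {6, 1}) = ({1} : Finset ℕ) by decide] at hmem
    obtain ⟨c, -, hc⟩ := cone_single_elim lam 1 hmem
    rw [h1, Prod.ext_iff] at hc
    obtain ⟨e1, e2⟩ := hc
    simp only [Prod.smul_mk, smul_eq_mul] at e1 e2
    have hz : (A : ℝ) * D - (B : ℝ) * C = 0 := by
      linear_combination (A : ℝ) * e2 - (B : ℝ) * e1
    rcases hdR with h | h <;> linarith
end
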